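/- arXiv:1510.02335 — 7 statements merged into one kernel-verified Lean document; each statement's English description precedes it below -/
import Mathlib

section
/- Let U : Ω₁ × Ω₂ → [0,1] be a measurable function on a product of probability spaces, and let n, m ∈ ℕ. Then ∫_{x_1,…,x_n} ∫_{y_1,…,y_m} ∏_{i∈[n], j∈[m]} U(x_i, y_j) ≥ (∫∫ U)^{nm}, where all integrals are with respect to the product probability measures. -/
/-! Fixing `x ∈ Ω₁ⁿ`, the `m` right-hand vertices are independent, so the density of `K_{n,m}` is
`∫ₓ G(x)^m` with `G(x) = ∫_y ∏ᵢ U(xᵢ, y)` the density of the star `K_{n,1}` with leaves `x`.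
Jensen bounds this below by `(∫ G)^m`; by Fubini `∫ G = ∫_y (∫ₓ U(x, y))^n`, and Jensen again
bounds that below by `(∫∫ U)^n`. -/

open MeasureTheory unitInterval

section UnitIntervalValued

variable {α β : Type*} [MeasurableSpace α] [MeasurableSpace β] {μ : Measure α} {ν : Measure β}

lemma integrable_of_forall_mem_unitInterval [IsFiniteMeasure μ] {f : α → ℝ}
    (hf : AEStronglyMeasurable f μ) (hf01 : ∀ x, f x ∈ I) : Integrable f μ :=
  .of_bound hf 1 <| ae_of_all _ fun x ↦ abs_le.2 ⟨by linarith [(hf01 x).1], (hf01 x).2⟩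

lemma integral_mem_unitInterval [IsProbabilityMeasure μ] {f : α → ℝ} (hf01 : ∀ x, f x ∈ I) :
    ∫ x, f x ∂μ ∈ I := by
  refine ⟨integral_nonneg fun x ↦ (hf01 x).1, ?_⟩
  simpa using integral_mono_of_nonneg (ae_of_all _ fun x ↦ (hf01 x).1)
    (integrable_const (μ := μ) 1) (ae_of_all _ fun x ↦ (hf01 x).2)

lemma pow_integral_le_integral_pow [IsProbabilityMeasure μ] {f : α → ℝ}
    (hf0 : ∀ᵐ x ∂μ, 0 ≤ f x) (hf : Integrable f μ) {k : ℕ}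
    (hfk : Integrable (fun x ↦ f x ^ k) μ) : (∫ x, f x ∂μ) ^ k ≤ ∫ x, f x ^ k ∂μ :=
  (convexOn_pow k).map_integral_le (continuous_pow k).continuousOn isClosed_Ici hf0 hf hfk

lemma pow_integral_integral_le_integral_pow_integral [IsProbabilityMeasure μ]
    [IsProbabilityMeasure ν] {W : α → β → ℝ}
    (hW : AEStronglyMeasurable (Function.uncurry W) (μ.prod ν)) (hW01 : ∀ x y, W x y ∈ I)
    (k : ℕ) : (∫ x, ∫ y, W x y ∂ν ∂μ) ^ k ≤ ∫ x, (∫ y, W x y ∂ν) ^ k ∂μ := by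
  have hF : AEStronglyMeasurable (fun x ↦ ∫ y, W x y ∂ν) μ := hW.integral_prod_right'
  have hF01 x : ∫ y, W x y ∂ν ∈ I := integral_mem_unitInterval (hW01 x)
  exact pow_integral_le_integral_pow (ae_of_all _ fun x ↦ (hF01 x).1)
    (integrable_of_forall_mem_unitInterval hF hF01)
    (integrable_of_forall_mem_unitInterval (hF.pow k) fun x ↦ pow_mem (S := submonoid) (hF01 x) k)

end UnitIntervalValued

section StarDensity

variable {α β 𝕜 : Type*} [RCLike 𝕜] [MeasurableSpace β] {ν : Measure β} [SigmaFinite ν]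
  {κ : Type*} [Fintype κ]

lemma integral_pi_prod_prod_eq_pow {ι : Type*} [Fintype ι] (V : α → β → 𝕜) (x : κ → α) :
    ∫ y : ι → β, ∏ i, ∏ j, V (x i) (y j) ∂Measure.pi (fun _ ↦ ν) =
      (∫ y, ∏ i, V (x i) y ∂ν) ^ Fintype.card ι := by
  simp_rw [Finset.prod_comm (s := Finset.univ (α := κ))]
  exact integral_fintype_prod_eq_pow fun y ↦ ∏ i, V (x i) y

lemma integral_integral_pi_prod_eq_integral_pow [MeasurableSpace α] {μ : Measure α}
    [SigmaFinite μ] {V : α → β → 𝕜}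
    (hV : Integrable (fun p : (κ → α) × β ↦ ∏ i, V (p.1 i) p.2) ((Measure.pi fun _ ↦ μ).prod ν)) :
    ∫ x : κ → α, ∫ y, ∏ i, V (x i) y ∂ν ∂Measure.pi (fun _ ↦ μ) =
      ∫ y, (∫ x, V x y ∂μ) ^ Fintype.card κ ∂ν := by
  rw [integral_integral_swap hV]
  congr with y
  exact integral_fintype_prod_eq_pow (fun x ↦ V x y)

end StarDensity

/-- Sidorenko's conjecture for complete bipartite graphs `K_{n,m}`:
`t_B(K_{n,m}, U) ≥ (∫∫ U)^{nm}` for a bigraphon `U : Ω₁ × Ω₂ → [0,1]`. -/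
theorem sidorenko_complete_bipartite {Ω₁ Ω₂ : Type*} [MeasurableSpace Ω₁] [MeasurableSpace Ω₂]
    (μ : Measure Ω₁) (ν : Measure Ω₂) [IsProbabilityMeasure μ] [IsProbabilityMeasure ν]
    (U : Ω₁ → Ω₂ → ℝ) (hU : Measurable (Function.uncurry U))
    (hU0 : ∀ x y, 0 ≤ U x y) (hU1 : ∀ x y, U x y ≤ 1) (n m : ℕ) :
    (∫ x, ∫ y, U x y ∂ν ∂μ) ^ (n * m) ≤
      ∫ x : Fin n → Ω₁, ∫ y : Fin m → Ω₂, (∏ i, ∏ j, U (x i) (y j))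
        ∂(Measure.pi fun _ => ν) ∂(Measure.pi fun _ => μ) := by
  have hU01 x y : U x y ∈ I := ⟨hU0 x y, hU1 x y⟩
  have hstar : Measurable fun p : (Fin n → Ω₁) × Ω₂ ↦ ∏ i, U (p.1 i) p.2 :=
    Finset.measurable_prod _ fun i _ ↦
      hU.comp (f := fun p : (Fin n → Ω₁) × Ω₂ ↦ (p.1 i, p.2)) (by fun_prop)
  have hstar01 (x : Fin n → Ω₁) y : ∏ i, U (x i) y ∈ I :=
    unitInterval.prod_mem fun i _ ↦ hU01 _ _
  calc (∫ x, ∫ y, U x y ∂ν ∂μ) ^ (n * m)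
      = ((∫ y, ∫ x, U x y ∂μ ∂ν) ^ n) ^ m := by
        rw [integral_integral_swap (integrable_of_forall_mem_unitInterval hU.aestronglyMeasurable
          fun p ↦ hU01 p.1 p.2), pow_mul]
    _ ≤ (∫ y, (∫ x, U x y ∂μ) ^ n ∂ν) ^ m := by
        gcongr
        · exact pow_nonneg
            (integral_mem_unitInterval fun y ↦ integral_mem_unitInterval (hU01 · y)).1 n
        · exact pow_integral_integral_le_integral_pow_integral
            hU.aestronglyMeasurable.prod_swap (fun y x ↦ hU01 x y) n
    _ = (∫ x, ∫ y, ∏ i, U (x i) y ∂ν ∂(Measure.pi fun _ => μ)) ^ m := by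
        rw [integral_integral_pi_prod_eq_integral_pow (integrable_of_forall_mem_unitInterval
          hstar.aestronglyMeasurable fun p ↦ hstar01 p.1 p.2), Fintype.card_fin]
    _ ≤ ∫ x, (∫ y, ∏ i, U (x i) y ∂ν) ^ m ∂(Measure.pi fun _ => μ) :=
        pow_integral_integral_le_integral_pow_integral hstar.aestronglyMeasurable hstar01 m
    _ = _ := by simp_rw [integral_pi_prod_prod_eq_pow, Fintype.card_fin]
end

section
/- Let U : Ω₁ × Ω₂ → [0,1] be a measurable function on a product of probability spaces (a bigraphon). For all i, j, h ∈ ℕ we have t_B(K_{i,h},U) · t_B(K_{j,h},U) ≤ t_B(K_{i+j,h},U). -/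
/-!
Integrating out the `Ω₁`-variables first, `t_B(K_{a,h}, U) = ∫ F(y)^a dν^h(y)` with
`F(y) = ∫ ∏_s U(x, y_s) dμ(x) ∈ [0,1]`. The functions `F^i` and `F^j` are similarly ordered,
so Chebyshev's integral inequality gives `∫ F^i · ∫ F^j ≤ ∫ F^(i+j)`.
-/

open MeasureTheory

/-- The bipartite homomorphism density of the complete bipartite graph `K_{a,b}` in a
bigraphon `U : Ω₁ × Ω₂ → [0,1]`. -/
noncomputable def tBcomplete {Ω₁ Ω₂ : Type*} [MeasurableSpace Ω₁] [MeasurableSpace Ω₂]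
    (μ : Measure Ω₁) (ν : Measure Ω₂) (U : Ω₁ → Ω₂ → ℝ) (a b : ℕ) : ℝ :=
  ∫ x : Fin a → Ω₁, ∫ y : Fin b → Ω₂, (∏ r, ∏ s, U (x r) (y s))
    ∂(Measure.pi fun _ => ν) ∂(Measure.pi fun _ => μ)

open Set Finset

-- Integrate the rearrangement inequality `f x g y + f y g x ≤ f x g x + f y g y` over `m × m`.
theorem Monovary.integral_mul_integral_le {α : Type*} [MeasurableSpace α] {m : Measure α}
    [IsFiniteMeasure m] {f g : α → ℝ} (hfg : Monovary f g)
    (hf : Integrable f m) (hg : Integrable g m) (hfg' : Integrable (fun x => f x * g x) m) :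
    (∫ x, f x ∂m) * ∫ x, g x ∂m ≤ m.real univ * ∫ x, f x * g x ∂m := by
  have h : ∫ p, f p.1 * g p.2 + g p.1 * f p.2 ∂m.prod m
      ≤ ∫ p, f p.1 * g p.1 + f p.2 * g p.2 ∂m.prod m :=
    integral_mono ((hf.mul_prod hg).add (hg.mul_prod hf))
      ((hfg'.comp_fst m).add (hfg'.comp_snd m)) fun p => by
        simpa only [mul_comm (g p.1)] using hfg.mul_add_mul_le_mul_add_mul p.1 p.2
  rw [integral_add (hf.mul_prod hg) (hg.mul_prod hf), integral_prod_mul, integral_prod_mul,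
    integral_add (hfg'.comp_fst m) (hfg'.comp_snd m), integral_fun_fst (fun x => f x * g x),
    integral_fun_snd (fun x => f x * g x), smul_eq_mul] at h
  linarith

theorem monovary_pow_pow {α : Type*} {F : α → ℝ} (hF : ∀ x, 0 ≤ F x) (i j : ℕ) :
    Monovary (fun x => F x ^ i) (fun x => F x ^ j) := fun x y hlt =>
  pow_le_pow_left₀ (hF x) (lt_of_pow_lt_pow_left₀ j (hF y) hlt).le i

theorem integral_pow_mul_integral_pow_le {α : Type*} [MeasurableSpace α] {m : Measure α}
    [IsProbabilityMeasure m] {F : α → ℝ} (hF : AEStronglyMeasurable F m)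
    (hF0 : ∀ x, 0 ≤ F x) {C : ℝ} (hFC : ∀ x, F x ≤ C) (i j : ℕ) :
    (∫ x, F x ^ i ∂m) * ∫ x, F x ^ j ∂m ≤ ∫ x, F x ^ (i + j) ∂m := by
  have hint : ∀ k : ℕ, Integrable (fun x => F x ^ k) m := fun k =>
    .of_bound (hF.pow k) (C ^ k) (.of_forall fun x => by
      rw [Real.norm_of_nonneg (pow_nonneg (hF0 x) k)]
      exact pow_le_pow_left₀ (hF0 x) (hFC x) k)
  simpa [pow_add] using
    (monovary_pow_pow hF0 i j).integral_mul_integral_le (hint i) (hint j)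
      (by simpa [pow_add] using hint (i + j))

theorem tBcomplete_eq_integral_pow {Ω₁ Ω₂ : Type*} [MeasurableSpace Ω₁] [MeasurableSpace Ω₂]
    (μ : Measure Ω₁) (ν : Measure Ω₂) [IsFiniteMeasure μ] [IsFiniteMeasure ν]
    {U : Ω₁ → Ω₂ → ℝ} (hU : Measurable (Function.uncurry U))
    (hU1 : ∀ x y, ‖U x y‖ ≤ 1) (a b : ℕ) :
    tBcomplete μ ν U a b = ∫ y, (∫ x, ∏ s, U x (y s) ∂μ) ^ a ∂(Measure.pi fun _ : Fin b => ν) := by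
  have hmeas : Measurable fun p : (Fin a → Ω₁) × (Fin b → Ω₂) => ∏ r, ∏ s, U (p.1 r) (p.2 s) :=
    Finset.measurable_prod _ fun r _ => Finset.measurable_prod _ fun s _ =>
      hU.comp (by fun_prop : Measurable fun p : (Fin a → Ω₁) × (Fin b → Ω₂) => (p.1 r, p.2 s))
  have hint : Integrable (Function.uncurry fun (x : Fin a → Ω₁) (y : Fin b → Ω₂) =>
      ∏ r, ∏ s, U (x r) (y s)) ((Measure.pi fun _ => μ).prod (Measure.pi fun _ => ν)) :=
    .of_bound hmeas.aestronglyMeasurable 1 (.of_forall fun p => by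
      simp only [Function.uncurry, norm_prod]
      exact prod_le_one (fun _ _ => by positivity) fun r _ =>
        prod_le_one (fun _ _ => norm_nonneg _) fun s _ => hU1 _ _)
  rw [tBcomplete, integral_integral_swap hint]
  congr 1 with y
  simpa using integral_fintype_prod_eq_pow (fun x => ∏ s, U x (y s)) (μ := μ) (ι := Fin a)

/-- For all `i, j, h ∈ ℕ` we have `t_B(K_{i,h},U) · t_B(K_{j,h},U) ≤ t_B(K_{i+j,h},U)`. -/
theorem tB_complete_supermultiplicative {Ω₁ Ω₂ : Type*} [MeasurableSpace Ω₁]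
    [MeasurableSpace Ω₂] (μ : Measure Ω₁) (ν : Measure Ω₂)
    [IsProbabilityMeasure μ] [IsProbabilityMeasure ν]
    (U : Ω₁ → Ω₂ → ℝ) (hU : Measurable (Function.uncurry U))
    (hU0 : ∀ x y, 0 ≤ U x y) (hU1 : ∀ x y, U x y ≤ 1) (i j h : ℕ) :
    tBcomplete μ ν U i h * tBcomplete μ ν U j h ≤ tBcomplete μ ν U (i + j) h := by
  have hU_norm : ∀ x y, ‖U x y‖ ≤ 1 := fun x y => by
    rw [Real.norm_of_nonneg (hU0 x y)]; exact hU1 x y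
  set F := fun y : Fin h → Ω₂ => ∫ x, ∏ s, U x (y s) ∂μ
  have hF : StronglyMeasurable F := StronglyMeasurable.integral_prod_left <|
    Measurable.stronglyMeasurable <| Finset.measurable_prod _ fun s _ =>
      hU.comp (by fun_prop : Measurable fun p : Ω₁ × (Fin h → Ω₂) => (p.1, p.2 s))
  have hF0 : ∀ y, 0 ≤ F y := fun y =>
    integral_nonneg fun x => prod_nonneg fun s _ => hU0 x (y s)
  have hF1 : ∀ y, F y ≤ 1 := fun y => calc
    F y ≤ ‖F y‖ := Real.le_norm_self _
    _ ≤ 1 * μ.real univ := norm_integral_le_of_norm_le_const <| .of_forall fun x => by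
      rw [norm_prod]; exact prod_le_one (fun _ _ => norm_nonneg _) fun s _ => hU_norm _ _
    _ = 1 := by simp
  simp only [tBcomplete_eq_integral_pow μ ν hU hU_norm]
  exact integral_pow_mul_integral_pow_le hF.aestronglyMeasurable hF0 hF1 i j
end

section
/- Let W be a graphon and for k ∈ ℕ let t(K_k, W) be the homomorphism density of the complete graph K_k in W. Suppose t(K_ℓ, W) > 0 for some ℓ ≥ 1. Then P[ω(G(n,W)) ≥ ℓ] → 1 as n → ∞, where ω denotes the clique number of the inhomogeneous random graph G(n,W). -/
open MeasureTheory Filter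

/-- The homomorphism density `t(K_k, W)` of the complete graph `K_k` in a graphon `W`. -/
noncomputable def cliqueDensity {Ω : Type*} [MeasurableSpace Ω] (μ : Measure Ω)
    (W : Ω → Ω → ℝ) (k : ℕ) : ENNReal :=
  ∫⁻ x : Fin k → Ω,
      ∏ p ∈ Finset.univ.filter (fun p : Fin k × Fin k => p.1 < p.2),
        ENNReal.ofReal (W (x p.1) (x p.2))
    ∂(Measure.pi fun _ => μ)

/-- The sample space measure for the inhomogeneous random graph `G(n, W)`:
`n` i.i.d. vertices sampled from `μ` together with i.i.d. uniform `(0,1)` edge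
thresholds; the edge `{i, j}` (for `i < j`) is present iff the threshold at `(i,j)`
is at most `W(x_i, x_j)`. -/
noncomputable def gnwMeasure {Ω : Type*} [MeasurableSpace Ω] (μ : Measure Ω) (n : ℕ) :
    Measure ((Fin n → Ω) × (Fin n × Fin n → ℝ)) :=
  (Measure.pi fun _ => μ).prod
    (Measure.pi fun _ => (volume : Measure ℝ).restrict (Set.Ioo 0 1))

/-- The event that `G(n, W)` contains a clique on `ℓ` vertices, i.e. `ω(G(n,W)) ≥ ℓ`. -/
def hasCliqueEvent {Ω : Type*} (W : Ω → Ω → ℝ) (n ℓ : ℕ) :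
    Set ((Fin n → Ω) × (Fin n × Fin n → ℝ)) :=
  {z | ∃ S : Finset (Fin n), S.card = ℓ ∧
    ∀ i ∈ S, ∀ j ∈ S, i < j → z.2 (i, j) ≤ W (z.1 i) (z.1 j)}

/-! If `G(n, W)` has no `ℓ`-clique, then neither have its subgraphs induced on the first `m` and
on the last `k` vertices, and these are independent copies of `G(m, W)` and `G(k, W)`. Hence
`q n = P[ω(G(n, W)) < ℓ]` is submultiplicative, and `q ℓ = 1 - t(K_ℓ, W) < 1` forces `q n → 0`. -/

open scoped ENNReal Topology

open Function Set

namespace MeasureTheory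

variable {α α' β X : Type*} [Fintype α] [Fintype α'] [Fintype β] [MeasurableSpace X]
  (μ : Measure X) [IsProbabilityMeasure μ]

theorem measurePreserving_comp_of_injective {u : α → β} (hu : Injective u) :
    MeasurePreserving (fun x : β → X => x ∘ u)
      (Measure.pi fun _ => μ) (Measure.pi fun _ => μ) := by
  have hm : Measurable (fun x : β → X => x ∘ u) :=
    measurable_pi_lambda _ fun a => measurable_pi_apply (u a)
  refine ⟨hm, (Measure.pi_eq fun s hs => ?_).symm⟩
  have hpre : (fun x : β → X => x ∘ u) ⁻¹' univ.pi s =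
      univ.pi (Function.extend u s fun _ => univ) := by
    ext x
    simp only [mem_preimage, mem_univ_pi, comp_apply]
    refine ⟨fun h b => ?_, fun h a => by simpa [hu.extend_apply] using h (u a)⟩
    by_cases hb : ∃ a, u a = b
    · obtain ⟨a, rfl⟩ := hb
      simpa [hu.extend_apply] using h a
    · simp [extend_apply' _ _ _ hb]
  rw [Measure.map_apply hm (.univ_pi hs), hpre, Measure.pi_pi]
  exact (Fintype.prod_of_injective u hu _ _ (fun b hb => by simp [extend_apply' _ _ _ hb])
    fun a => by rw [hu.extend_apply]).symm

theorem measurePreserving_comp_prod_comp {f : α → β} {g : α' → β}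
    (h : Injective (Sum.elim f g)) :
    MeasurePreserving (fun x : β → X => (x ∘ f, x ∘ g))
      (Measure.pi fun _ => μ) ((Measure.pi fun _ : α => μ).prod (Measure.pi fun _ : α' => μ)) :=
  (measurePreserving_sumPiEquivProdPi fun _ : α ⊕ α' => μ).comp
    (measurePreserving_comp_of_injective μ h)

end MeasureTheory

section ProdProdProdComm

variable {A B C D : Type*} [MeasurableSpace A] [MeasurableSpace B] [MeasurableSpace C]
  [MeasurableSpace D] (μa : Measure A) (μb : Measure B) (μc : Measure C) (μd : Measure D)
  [SFinite μa] [SFinite μb] [SFinite μc] [SFinite μd]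

theorem MeasureTheory.measurePreserving_prodProdProdComm :
    MeasurePreserving (Equiv.prodProdProdComm A B C D)
      ((μa.prod μb).prod (μc.prod μd)) ((μa.prod μc).prod (μb.prod μd)) := by
  have swap_middle : MeasurePreserving (fun w : B × C × D => (w.2.1, (w.1, w.2.2)))
      (μb.prod (μc.prod μd)) (μc.prod (μb.prod μd)) :=
    (measurePreserving_prodAssoc μc μb μd).comp <|
      (Measure.measurePreserving_swap.prod (.id μd)).comp <|
        (measurePreserving_prodAssoc μb μc μd).symm MeasurableEquiv.prodAssoc
  exact ((measurePreserving_prodAssoc μa μc _).symm MeasurableEquiv.prodAssoc).comp <|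
    ((MeasurePreserving.id μa).prod swap_middle).comp (measurePreserving_prodAssoc μa μb _)

end ProdProdProdComm

theorem Function.Injective.sumElim_prodMap {α β γ : Type*} {f : α → γ} {g : β → γ}
    (h : Injective (Sum.elim f g)) : Injective (Sum.elim (Prod.map f f) (Prod.map g g)) := by
  have hf : Injective f := fun a b hab => Sum.inl_injective (h hab)
  have hg : Injective g := fun a b hab => Sum.inr_injective (h hab)
  refine (hf.prodMap hf).sumElim (hg.prodMap hg) fun a b hab => ?_
  exact Sum.inl_ne_inr (h (congrArg Prod.fst hab))

theorem ENNReal.tendsto_atTop_zero_of_submultiplicative {u : ℕ → ℝ≥0∞} (hle : ∀ n, u n ≤ 1)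
    (hmul : ∀ m n, u (m + n) ≤ u m * u n) {N : ℕ} (hN : u N < 1) :
    Tendsto u atTop (𝓝 0) := by
  have hanti : Antitone u := antitone_nat_of_succ_le fun n =>
    (hmul n 1).trans (mul_le_of_le_one_right' (hle 1))
  have hpow : ∀ k, u (k * N) ≤ u N ^ k := by
    intro k
    induction k with
    | zero => simpa using hle 0
    | succ k ih => calc
        u ((k + 1) * N) ≤ u (k * N) * u N := by rw [Nat.succ_mul]; exact hmul _ _
        _ ≤ u N ^ k * u N := by gcongr
        _ = u N ^ (k + 1) := (pow_succ _ _).symm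
  refine (ENNReal.tendsto_atTop_zero_iff_lt_of_antitone hanti).2 fun ε hε => ?_
  obtain ⟨k, hk⟩ := ((ENNReal.tendsto_pow_atTop_nhds_zero_of_lt_one hN).eventually
    (gt_mem_nhds hε)).exists
  exact ⟨k * N, (hpow k).trans_lt hk⟩

instance : IsProbabilityMeasure ((volume : Measure ℝ).restrict (Set.Ioo 0 1)) :=
  ⟨by simp⟩

theorem Real.volume_restrict_Ioo_zero_one_Iic {w : ℝ} (hw : w ≤ 1) :
    (volume : Measure ℝ).restrict (Ioo 0 1) (Iic w) = ENNReal.ofReal w := by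
  rw [Measure.restrict_congr_set Ioo_ae_eq_Ioc, Measure.restrict_apply measurableSet_Iic,
    Iic_inter_Ioc_of_le hw, Real.volume_Ioc, sub_zero]

section Sample

variable {Ω : Type*} {W : Ω → Ω → ℝ}

def inducedSample {m n : ℕ} (f : Fin m → Fin n) (z : (Fin n → Ω) × (Fin n × Fin n → ℝ)) :
    (Fin m → Ω) × (Fin m × Fin m → ℝ) :=
  (z.1 ∘ f, z.2 ∘ Prod.map f f)

theorem mem_hasCliqueEvent_of_inducedSample {m n ℓ : ℕ} {f : Fin m → Fin n} (hf : StrictMono f)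
    {z : (Fin n → Ω) × (Fin n × Fin n → ℝ)} (hz : inducedSample f z ∈ hasCliqueEvent W m ℓ) :
    z ∈ hasCliqueEvent W n ℓ := by
  obtain ⟨S, hcard, hS⟩ := hz
  refine ⟨S.map ⟨f, hf.injective⟩, by simpa using hcard, ?_⟩
  simp only [Finset.mem_map, Embedding.coeFn_mk]
  rintro _ ⟨a, ha, rfl⟩ _ ⟨b, hb, rfl⟩ hab
  exact hS a ha b hb (hf.lt_iff_lt.mp hab)

theorem hasCliqueEvent_self (ℓ : ℕ) : hasCliqueEvent W ℓ ℓ =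
    {z | ∀ p : Fin ℓ × Fin ℓ, p.1 < p.2 → z.2 p ≤ W (z.1 p.1) (z.1 p.2)} := by
  ext z
  refine ⟨fun ⟨S, hS, h⟩ p hp => ?_, fun h => ⟨Finset.univ, by simp, fun i _ j _ => h (i, j)⟩⟩
  obtain rfl : S = Finset.univ := Finset.eq_univ_of_card S (by simpa using hS)
  exact h p.1 (Finset.mem_univ _) p.2 (Finset.mem_univ _) hp

end Sample

section Measure

variable {Ω : Type*} [MeasurableSpace Ω] {μ : Measure Ω} {W : Ω → Ω → ℝ}

instance [IsProbabilityMeasure μ] (n : ℕ) : IsProbabilityMeasure (gnwMeasure μ n) := by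
  unfold gnwMeasure; infer_instance

theorem measurableSet_hasCliqueEvent (hW : Measurable (uncurry W)) (n ℓ : ℕ) :
    MeasurableSet (hasCliqueEvent W n ℓ) := by
  have hedge (i j : Fin n) : Measurable fun z : (Fin n → Ω) × (Fin n × Fin n → ℝ) =>
      z.2 (i, j) ≤ W (z.1 i) (z.1 j) :=
    measurableSet_setOfPred.1 <| measurableSet_le (by fun_prop)
      (hW.comp (by fun_prop : Measurable fun z : (Fin n → Ω) × _ => (z.1 i, z.1 j)))
  exact measurableSet_setOfPred.2 <| Measurable.exists fun S => measurable_const.and <|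
    Measurable.forall fun i => measurable_const.imp <| Measurable.forall fun j =>
      measurable_const.imp <| measurable_const.imp (hedge i j)

theorem measurePreserving_inducedSample_castAdd_natAdd [IsProbabilityMeasure μ] (m k : ℕ) :
    MeasurePreserving
      (fun z => (inducedSample (Ω := Ω) (Fin.castAdd k) z, inducedSample (Fin.natAdd m) z))
      (gnwMeasure μ (m + k)) ((gnwMeasure μ m).prod (gnwMeasure μ k)) := by
  have hinj : Injective (Sum.elim (Fin.castAdd k) (Fin.natAdd m)) := finSumFinEquiv.injective
  exact (measurePreserving_prodProdProdComm _ _ _ _).comp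
    ((measurePreserving_comp_prod_comp μ hinj).prod
      (measurePreserving_comp_prod_comp _ hinj.sumElim_prodMap))

theorem gnwMeasure_compl_hasCliqueEvent_add_le [IsProbabilityMeasure μ]
    (hW : Measurable (uncurry W)) (m k ℓ : ℕ) :
    gnwMeasure μ (m + k) (hasCliqueEvent W (m + k) ℓ)ᶜ ≤
      gnwMeasure μ m (hasCliqueEvent W m ℓ)ᶜ * gnwMeasure μ k (hasCliqueEvent W k ℓ)ᶜ := by
  have hsub : (hasCliqueEvent W (m + k) ℓ)ᶜ ⊆
      (fun z => (inducedSample (Fin.castAdd k) z, inducedSample (Fin.natAdd m) z)) ⁻¹'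
        ((hasCliqueEvent W m ℓ)ᶜ ×ˢ (hasCliqueEvent W k ℓ)ᶜ) := fun z hz =>
    ⟨fun h => hz (mem_hasCliqueEvent_of_inducedSample (Fin.strictMono_castAdd k) h),
      fun h => hz (mem_hasCliqueEvent_of_inducedSample (Fin.strictMono_natAdd m) h)⟩
  calc gnwMeasure μ (m + k) (hasCliqueEvent W (m + k) ℓ)ᶜ
      ≤ gnwMeasure μ (m + k) (_ ⁻¹' ((hasCliqueEvent W m ℓ)ᶜ ×ˢ (hasCliqueEvent W k ℓ)ᶜ)) :=
        measure_mono hsub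
    _ = _ := by
      rw [(measurePreserving_inducedSample_castAdd_natAdd m k).measure_preimage
        ((measurableSet_hasCliqueEvent hW m ℓ).compl.prod
          (measurableSet_hasCliqueEvent hW k ℓ).compl).nullMeasurableSet, Measure.prod_prod]

theorem gnwMeasure_hasCliqueEvent_self (hW : Measurable (uncurry W)) (h1 : ∀ x y, W x y ≤ 1)
    (ℓ : ℕ) : gnwMeasure μ ℓ (hasCliqueEvent W ℓ ℓ) = cliqueDensity μ W ℓ := by
  rw [gnwMeasure, Measure.prod_apply (measurableSet_hasCliqueEvent hW ℓ ℓ), cliqueDensity]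
  refine lintegral_congr fun x => ?_
  have hslice : Prod.mk x ⁻¹' hasCliqueEvent W ℓ ℓ = univ.pi fun p : Fin ℓ × Fin ℓ =>
      if p.1 < p.2 then Iic (W (x p.1) (x p.2)) else univ := by
    ext θ
    simp only [hasCliqueEvent_self, mem_preimage, mem_ofPred_eq, mem_univ_pi]
    refine forall_congr' fun p => ?_
    split_ifs with hp <;> simp [hp]
  rw [hslice, Measure.pi_pi, Finset.prod_filter]
  refine Finset.prod_congr rfl fun p _ => ?_
  split_ifs
  · exact Real.volume_restrict_Ioo_zero_one_Iic (h1 _ _)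
  · exact measure_univ

end Measure

theorem clique_zero_one_law_general {Ω : Type*} [MeasurableSpace Ω] (μ : Measure Ω)
    [IsProbabilityMeasure μ] (W : Ω → Ω → ℝ) (hW : Measurable (Function.uncurry W))
    (h1 : ∀ x y, W x y ≤ 1)
    (ℓ : ℕ) (hpos : 0 < cliqueDensity μ W ℓ) :
    Tendsto (fun n => gnwMeasure μ n (hasCliqueEvent W n ℓ)) atTop (nhds 1) := by
  have hno_clique : Tendsto (fun n => gnwMeasure μ n (hasCliqueEvent W n ℓ)ᶜ) atTop (𝓝 0) := by
    refine ENNReal.tendsto_atTop_zero_of_submultiplicative (fun n => prob_le_one)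
      (gnwMeasure_compl_hasCliqueEvent_add_le hW · · ℓ) (N := ℓ) ?_
    rw [prob_compl_eq_one_sub (measurableSet_hasCliqueEvent hW ℓ ℓ),
      gnwMeasure_hasCliqueEvent_self hW h1]
    exact ENNReal.sub_lt_self ENNReal.one_ne_top one_ne_zero hpos.ne'
  have hcompl (n : ℕ) : gnwMeasure μ n (hasCliqueEvent W n ℓ) =
      1 - gnwMeasure μ n (hasCliqueEvent W n ℓ)ᶜ := by
    rw [prob_compl_eq_one_sub (measurableSet_hasCliqueEvent hW n ℓ), ENNReal.sub_sub_cancel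
      ENNReal.one_ne_top prob_le_one]
  simpa [hcompl] using ENNReal.Tendsto.sub tendsto_const_nhds hno_clique (.inl ENNReal.one_ne_top)

/-- If `t(K_ℓ, W) > 0` for some `ℓ ≥ 1`, then `P[ω(G(n,W)) ≥ ℓ] → 1` as `n → ∞`. -/
theorem clique_zero_one_law {Ω : Type*} [MeasurableSpace Ω] (μ : Measure Ω)
    [IsProbabilityMeasure μ] (W : Ω → Ω → ℝ) (hW : Measurable (Function.uncurry W))
    (hsymm : ∀ x y, W x y = W y x) (h0 : ∀ x y, 0 ≤ W x y) (h1 : ∀ x y, W x y ≤ 1)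
    (ℓ : ℕ) (hℓ : 1 ≤ ℓ) (hpos : 0 < cliqueDensity μ W ℓ) :
    Tendsto (fun n => gnwMeasure μ n (hasCliqueEvent W n ℓ)) atTop (nhds 1) :=
  clique_zero_one_law_general μ W hW h1 ℓ hpos
end

section
/- Let W be a graphon such that the supremum L = sup{k ∈ ℕ : t(K_k, W) > 0} is finite and L ≥ 2, and assume t(K_L,W) > 0. Then there exists a measurable set B ⊆ Ω of positive measure such that W restricted to B × B is 0 almost everywhere. -/
open MeasureTheory

/-! Write `L = n + 1` and split a clique tuple as `x : Fin n → Ω` followed by vertices `y`, `z`.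
With `F x` the clique weight of `x` and `G x y = ∏ i, W (x i) y` its common-neighbourhood weight,
`t(K_L) = ∫ F x * ∫ G x` and `t(K_{L+1}) = ∫ F x * ∬ G x y * G x z * W y z`. The first is
positive and the second vanishes, so for some `x` we have `F x ≠ 0`, `∫ G x ≠ 0` and
`∬ G x y * G x z * W y z = 0`: the support of `G x` is the zero block. -/

theorem lintegral_pi_fin_snoc {α : Type*} [MeasurableSpace α] (μ : Measure α) [SigmaFinite μ]
    {k : ℕ} {f : (Fin (k + 1) → α) → ENNReal} (hf : Measurable f) :
    ∫⁻ x, f x ∂(Measure.pi fun _ => μ) =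
      ∫⁻ x, ∫⁻ y, f (Fin.snoc x y) ∂μ ∂(Measure.pi fun _ : Fin k => μ) := by
  rw [← ((measurePreserving_piFinSuccAbove (fun _ => μ) (Fin.last k)).symm).lintegral_comp hf,
    lintegral_prod_symm']
  · simp [Fin.snocEquiv]
  · exact hf.comp (MeasurableEquiv.measurable _)

section

variable {α : Type*} [MeasurableSpace α] (μ : Measure α)

theorem exists_ne_zero_and_eq_zero_of_lintegral {f g : α → ENNReal} (hf : ∫⁻ a, f a ∂μ ≠ 0)
    (hg : Measurable g) (hg0 : ∫⁻ a, g a ∂μ = 0) : ∃ a, f a ≠ 0 ∧ g a = 0 := by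
  by_contra! h
  refine hf (lintegral_eq_zero_of_ae_eq_zero ?_)
  filter_upwards [(lintegral_eq_zero_iff hg).1 hg0] with a ha
  by_contra hfa
  exact h a hfa ha

theorem exists_zero_block_of_lintegral_eq_zero [SFinite μ] {W : α → α → ℝ}
    (hW : Measurable (Function.uncurry W)) (hW0 : ∀ x y, 0 ≤ W x y) {g : α → ENNReal}
    (hg : Measurable g) (hg0 : ∫⁻ a, g a ∂μ ≠ 0)
    (hgW : ∫⁻ p, g p.1 * g p.2 * ENNReal.ofReal (W p.1 p.2) ∂μ.prod μ = 0) :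
    ∃ B : Set α, MeasurableSet B ∧ 0 < μ B ∧
      ∀ᵐ p ∂μ.prod μ, p.1 ∈ B → p.2 ∈ B → W p.1 p.2 = 0 := by
  have hw : Measurable fun p : α × α => ENNReal.ofReal (W p.1 p.2) := hW.ennreal_ofReal
  refine ⟨Function.support g, measurableSet_support hg,
    (lintegral_pos_iff_support hg).1 (pos_iff_ne_zero.2 hg0), ?_⟩
  filter_upwards [(lintegral_eq_zero_iff (by fun_prop)).1 hgW] with p hp hp1 hp2
  simp only [Pi.zero_apply, mul_eq_zero, ENNReal.ofReal_eq_zero] at hp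
  exact (hp.resolve_left (not_or.2 ⟨hp1, hp2⟩)).antisymm (hW0 _ _)

end

section

open Finset

variable {Ω : Type*}

noncomputable def cliqueWeight (W : Ω → Ω → ℝ) (k : ℕ) (x : Fin k → Ω) : ENNReal :=
  ∏ p ∈ univ.filter (fun p : Fin k × Fin k => p.1 < p.2), ENNReal.ofReal (W (x p.1) (x p.2))

noncomputable def commonNeighborWeight (W : Ω → Ω → ℝ) {k : ℕ} (x : Fin k → Ω) (y : Ω) :
    ENNReal :=
  ∏ i, ENNReal.ofReal (W (x i) y)

theorem cliqueWeight_eq_prod_prod_Iio (W : Ω → Ω → ℝ) {k : ℕ} (x : Fin k → Ω) :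
    cliqueWeight W k x = ∏ j, ∏ i ∈ Iio j, ENNReal.ofReal (W (x i) (x j)) :=
  prod_finset_product_right' _ _ _ (by simp) (f := fun i j => ENNReal.ofReal (W (x i) (x j)))

theorem cliqueWeight_snoc (W : Ω → Ω → ℝ) {k : ℕ} (x : Fin k → Ω) (y : Ω) :
    cliqueWeight W (k + 1) (Fin.snoc x y) = cliqueWeight W k x * commonNeighborWeight W x y := by
  simp [cliqueWeight_eq_prod_prod_Iio, Fin.prod_univ_castSucc, Fin.prod_Iio_castSucc,
    Fin.Iio_last_eq_map, commonNeighborWeight]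

theorem commonNeighborWeight_snoc (W : Ω → Ω → ℝ) {k : ℕ} (x : Fin k → Ω) (y z : Ω) :
    commonNeighborWeight W (Fin.snoc x y) z =
      commonNeighborWeight W x z * ENNReal.ofReal (W y z) := by
  simp [commonNeighborWeight, Fin.prod_univ_castSucc]

variable [MeasurableSpace Ω] {W : Ω → Ω → ℝ}

theorem measurable_cliqueWeight (hW : Measurable (Function.uncurry W)) (k : ℕ) :
    Measurable (cliqueWeight W k) :=
  Finset.measurable_prod _ fun p _ => Measurable.ennreal_ofReal <|
    hW.comp (f := fun x : Fin k → Ω => (x p.1, x p.2)) (by fun_prop)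

theorem measurable_commonNeighborWeight (hW : Measurable (Function.uncurry W)) (k : ℕ) :
    Measurable fun q : (Fin k → Ω) × Ω => commonNeighborWeight W q.1 q.2 :=
  Finset.measurable_prod _ fun i _ => Measurable.ennreal_ofReal <|
    hW.comp (f := fun q : (Fin k → Ω) × Ω => (q.1 i, q.2)) (by fun_prop)

theorem cliqueDensity_eq_lintegral_cliqueWeight (μ : Measure Ω) (W : Ω → Ω → ℝ) (k : ℕ) :
    cliqueDensity μ W k = ∫⁻ x, cliqueWeight W k x ∂(Measure.pi fun _ => μ) :=
  rfl

variable (μ : Measure Ω) [SigmaFinite μ]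

theorem cliqueDensity_succ (hW : Measurable (Function.uncurry W)) (k : ℕ) :
    cliqueDensity μ W (k + 1) = ∫⁻ x, cliqueWeight W k x *
      ∫⁻ y, commonNeighborWeight W x y ∂μ ∂(Measure.pi fun _ => μ) := by
  rw [cliqueDensity_eq_lintegral_cliqueWeight,
    lintegral_pi_fin_snoc μ (measurable_cliqueWeight hW _)]
  refine lintegral_congr fun x => ?_
  simp_rw [cliqueWeight_snoc]
  exact lintegral_const_mul _ ((measurable_commonNeighborWeight hW k).comp measurable_prodMk_left)

theorem measurable_lintegral_prod_commonNeighborWeight (hW : Measurable (Function.uncurry W))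
    (k : ℕ) :
    Measurable fun x : Fin k → Ω => ∫⁻ p, commonNeighborWeight W x p.1 *
      commonNeighborWeight W x p.2 * ENNReal.ofReal (W p.1 p.2) ∂μ.prod μ := by
  have hg := measurable_commonNeighborWeight hW k
  have hw : Measurable fun p : Ω × Ω => ENNReal.ofReal (W p.1 p.2) := hW.ennreal_ofReal
  exact Measurable.lintegral_prod_right' (f := fun q : (Fin k → Ω) × Ω × Ω =>
    commonNeighborWeight W q.1 q.2.1 * commonNeighborWeight W q.1 q.2.2 *
      ENNReal.ofReal (W q.2.1 q.2.2)) (by fun_prop)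

theorem cliqueDensity_succ_succ (hW : Measurable (Function.uncurry W)) (k : ℕ) :
    cliqueDensity μ W (k + 2) = ∫⁻ x, cliqueWeight W k x *
      ∫⁻ p, commonNeighborWeight W x p.1 * commonNeighborWeight W x p.2 * ENNReal.ofReal (W p.1 p.2)
        ∂μ.prod μ ∂(Measure.pi fun _ => μ) := by
  rw [cliqueDensity_succ μ hW, lintegral_pi_fin_snoc μ]
  · refine lintegral_congr fun x => ?_
    simp_rw [cliqueWeight_snoc, commonNeighborWeight_snoc]
    have hg : Measurable (commonNeighborWeight W x) :=
      (measurable_commonNeighborWeight hW k).comp measurable_prodMk_left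
    have hw : Measurable fun p : Ω × Ω => ENNReal.ofReal (W p.1 p.2) := hW.ennreal_ofReal
    have hF : Measurable fun p : Ω × Ω => commonNeighborWeight W x p.1 *
        commonNeighborWeight W x p.2 * ENNReal.ofReal (W p.1 p.2) := by
      fun_prop
    rw [lintegral_prod _ hF.aemeasurable, ← lintegral_const_mul _ hF.lintegral_prod_right']
    refine lintegral_congr fun y => ?_
    rw [mul_assoc, ← lintegral_const_mul _ (by fun_prop)]
    simp only [mul_assoc]
  · exact (measurable_cliqueWeight hW _).mul
      (measurable_commonNeighborWeight hW _).lintegral_prod_right'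

end

theorem exists_zero_block_general {Ω : Type*} [MeasurableSpace Ω]
    (μ : Measure Ω) [IsProbabilityMeasure μ]
    (W : Ω → Ω → ℝ) (hW : Measurable (Function.uncurry W))
    (h0 : ∀ x y, 0 ≤ W x y)
    (L : ℕ) (hL2 : 2 ≤ L) (hLpos : 0 < cliqueDensity μ W L)
    (hLsup : ∀ k, L < k → cliqueDensity μ W k = 0) :
    ∃ B : Set Ω, MeasurableSet B ∧ 0 < μ B ∧
      ∀ᵐ z ∂(μ.prod μ), z.1 ∈ B → z.2 ∈ B → W z.1 z.2 = 0 := by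
  obtain ⟨n, rfl⟩ : ∃ n, L = n + 1 := ⟨L - 1, by omega⟩
  rw [cliqueDensity_succ μ hW] at hLpos
  have hnext := hLsup (n + 2) (by omega)
  rw [cliqueDensity_succ_succ μ hW] at hnext
  obtain ⟨x, hx, hx'⟩ := exists_ne_zero_and_eq_zero_of_lintegral _ hLpos.ne'
    ((measurable_cliqueWeight hW n).mul (measurable_lintegral_prod_commonNeighborWeight μ hW n))
    hnext
  rw [mul_ne_zero_iff] at hx
  exact exists_zero_block_of_lintegral_eq_zero μ hW h0
    ((measurable_commonNeighborWeight hW n).comp measurable_prodMk_left) hx.2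
    ((mul_eq_zero.1 hx').resolve_left hx.1)

/-- If `L = sup{k : t(K_k, W) > 0}` is finite with `L ≥ 2` and `t(K_L, W) > 0`, then
there is a positive-measure set `B` with `W = 0` a.e. on `B × B`. -/
theorem exists_zero_block {Ω : Type*} [MeasurableSpace Ω] [StandardBorelSpace Ω]
    (μ : Measure Ω) [IsProbabilityMeasure μ] [NullSingletonClass μ]
    (W : Ω → Ω → ℝ) (hW : Measurable (Function.uncurry W))
    (hsymm : ∀ x y, W x y = W y x) (h0 : ∀ x y, 0 ≤ W x y) (h1 : ∀ x y, W x y ≤ 1)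
    (L : ℕ) (hL2 : 2 ≤ L) (hLpos : 0 < cliqueDensity μ W L)
    (hLsup : ∀ k, L < k → cliqueDensity μ W k = 0) :
    ∃ B : Set Ω, MeasurableSet B ∧ 0 < μ B ∧
      ∀ᵐ z ∂(μ.prod μ), z.1 ∈ B → z.2 ∈ B → W z.1 z.2 = 0 :=
  exists_zero_block_general μ W hW h0 L hL2 hLpos hLsup
end

section
/- Let Γ be a functional of the form Γ(g) determined by numbers A = ‖g'‖₁, B = ‖g''‖₁, C, D, E ≥ 0 via Γ(g') = A − C, Γ(g'') = B − D, Γ(g'+g'') = A + B − C − D − E, and Γ((1−ε₁)g' + (1+ε₂)g'') = (1−ε₁)A + (1+ε₂)B − (1−ε₁)²C − (1+ε₂)²D − (1−ε₁)(1+ε₂)E. Assume B > 0, Γ(g'+g'') ≥ 0 and Γ(g') < 0 (i.e. A < C). Then 2C + E − 2AD/B − AE/B > 0, and consequently there exist ε₁ ∈ (0,1) and ε₂ ∈ (0,1) with ε₂ > (A/B)ε₁ such that Γ((1−ε₁)g' + (1+ε₂)g'') ≥ 0 and (1−ε₁)A + (1+ε₂)B > A + B. -/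
/-- The quadratic-perturbation lemma underlying Claim A.2: with
`Γ(g') = A - C`, `Γ(g'+g'') = A + B - C - D - E`, and
`Γ((1-ε₁)g' + (1+ε₂)g'') = (1-ε₁)A + (1+ε₂)B - (1-ε₁)²C - (1+ε₂)²D - (1-ε₁)(1+ε₂)E`,
if `Γ(g'+g'') ≥ 0` and `Γ(g') < 0` then `2C + E - 2AD/B - AE/B > 0` and there are
`ε₁, ε₂ ∈ (0,1)` with `ε₂ > (A/B)ε₁` keeping `Γ` nonnegative while strictly
increasing the L¹-norm `(1-ε₁)A + (1+ε₂)B > A + B`. -/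
theorem quadratic_perturbation (A B C D E : ℝ) (hA : 0 < A) (hB : 0 < B)
    (hC : 0 ≤ C) (hD : 0 ≤ D) (hE : 0 ≤ E)
    (hΓ : 0 ≤ A + B - C - D - E) (hg' : A < C) :
    0 < 2 * C + E - 2 * A * D / B - A * E / B ∧
    ∃ ε₁ ∈ Set.Ioo (0 : ℝ) 1, ∃ ε₂ ∈ Set.Ioo (0 : ℝ) 1,
      (A / B) * ε₁ < ε₂ ∧
      0 ≤ (1 - ε₁) * A + (1 + ε₂) * B - (1 - ε₁) ^ 2 * C - (1 + ε₂) ^ 2 * D -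
            (1 - ε₁) * (1 + ε₂) * E ∧
      A + B < (1 - ε₁) * A + (1 + ε₂) * B := by
  have hCA : 0 < C - A := sub_pos.mpr hg'
  have hK0 : 0 < 2*B*C + B*E - 2*A*D - A*E := by
    nlinarith [mul_nonneg hA.le hΓ, mul_pos hB hCA, mul_pos hA hCA,
      mul_nonneg hB.le hE, mul_nonneg hA.le hE]
  constructor
  · have h : 2 * C + E - 2 * A * D / B - A * E / B
        = (2*B*C + B*E - 2*A*D - A*E) / B := by
      field_simp
    rw [h]; exact div_pos hK0 hB
  · set K := 2*B*C + B*E - 2*A*D - A*E with hKdef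
    have hden : 0 < 2*B*(B+2*D+E) := by positivity
    set θ := K / (2*B*(B+2*D+E)) with hθdef
    have hθ : 0 < θ := div_pos hK0 hden
    have hθK : θ * (2*B*(B+2*D+E)) = K := div_mul_cancel₀ _ hden.ne'
    set s := A/B + θ with hsdef
    have hs : 0 < s := add_pos (div_pos hA hB) hθ
    have hsB : s * B = A + θ * B := by
      rw [hsdef, add_mul, div_mul_cancel₀ _ hB.ne']
    set M := C + s^2*D + s*E + 1 with hMdef
    have hM : 0 < M := by positivity
    set e := min (min (1/2) (1/(2*s))) (K/(2*B)/(2*M)) with hedef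
    have he : 0 < e := lt_min (lt_min (by norm_num) (by positivity))
      (div_pos (div_pos hK0 (by positivity)) (by positivity))
    have he1 : e ≤ 1/2 := le_trans (min_le_left _ _) (min_le_left _ _)
    have he2 : e ≤ 1/(2*s) := le_trans (min_le_left _ _) (min_le_right _ _)
    have he3 : e ≤ K/(2*B)/(2*M) := min_le_right _ _
    have hABs : A/B < s := by rw [hsdef]; linarith
    clear_value K θ s M e
    -- product substitution facts
    have hsBD : s*B*D = (A+θ*B)*D := by rw [hsB]
    have hsBE : s*B*E = (A+θ*B)*E := by rw [hsB]
    have hsBB : s*B*B = (A+θ*B)*B := by rw [hsB]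
    -- linear coefficient lower bound
    have hL : K/(2*B) ≤ -A + s*B + 2*C - 2*s*D + E - s*E := by
      rw [div_le_iff₀ (by positivity : (0:ℝ) < 2*B)]
      nlinarith [hsBD, hsBE, hsBB, hθK, mul_pos hθ (mul_pos hB hB)]
    -- quadratic coefficient lower bound
    have hQ : -M ≤ -C - s^2*D + s*E := by
      nlinarith [mul_nonneg hs.le hE]
    have hA4 : e*(2*M) ≤ K/(2*B) := (le_div_iff₀ (by positivity)).mp he3
    refine ⟨e, ⟨he, by linarith⟩, s*e, ⟨mul_pos hs he, ?_⟩, ?_, ?_, ?_⟩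
    · have h2s : s*(1/(2*s)) = 1/2 := by field_simp
      have := mul_le_mul_of_nonneg_left he2 hs.le
      linarith
    · exact mul_lt_mul_of_pos_right hABs he
    · have h1 := mul_le_mul_of_nonneg_left hL he.le
      have h2 := mul_le_mul_of_nonneg_left hQ (sq_nonneg e)
      have h3 := mul_le_mul_of_nonneg_left hA4 he.le
      have h4 : 0 ≤ e^2*M := mul_nonneg (sq_nonneg e) hM.le
      have hid : (1-e)*A + (1+s*e)*B - (1-e)^2*C - (1+s*e)^2*D -
            (1-e)*(1+s*e)*E
          = (A+B-C-D-E) + e*(-A + s*B + 2*C - 2*s*D + E - s*E)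
            + e^2*(-C - s^2*D + s*E) := by ring
      rw [hid]
      linarith [hΓ, h1, h2, h3, h4]
    · have h5 : e*(s*B) = e*(A+θ*B) := by rw [hsB]
      have h6 : 0 < e*(θ*B) := mul_pos he (mul_pos hθ hB)
      linarith [h5, h6]
end

section
/- Suppose W is a graphon such that for some admissible histogram f* we have ‖f*‖₁ = κ(W), where κ(W) = sup{‖f‖₁ : f nonnegative L¹, Γ(f,W) ≥ 0}. Then every nonnegative measurable function f with f ≤ f* pointwise satisfies Γ(f,W) ≥ 0. -/
/-!
Write `K(u,v) = ∫∫ u(x) v(y) log(1/W(x,y))`, `g = f* - f` and `h_β = f + β g`, so `f* = h_1`.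
Rescaling any `h` with `0 < K(h,h) < ∞` by `2‖h‖₁ / K(h,h)` makes it admissible with mass
`2‖h‖₁² / K(h,h)`, so optimality of `f*` gives `φ(β) := ‖f*‖₁ K(h_β,h_β) - 2‖h_β‖₁² ≥ 0` for
`β ≥ 0`, while admissibility of `f*` is `φ(1) ≤ 0`. As `φ` is a quadratic polynomial in `β`, its
right derivative at `1` is nonnegative: `K(f,g) + K(g,g) ≥ 2‖g‖₁` (when `‖f*‖₁ > 0`). Subtracting
this from `K(f,f) + 2K(f,g) + K(g,g) = K(f*,f*) ≤ 2‖f*‖₁` leaves `K(f,f) ≤ 2‖f‖₁`.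
-/

open MeasureTheory

/-- `log(1/W(x,y))` as an extended nonnegative real, with value `∞` when `W(x,y) = 0`. -/
noncomputable def negLog {Ω : Type*} (W : Ω → Ω → ℝ) (x y : Ω) : ENNReal :=
  if W x y = 0 then ⊤ else ENNReal.ofReal (-Real.log (W x y))

open Function NNReal ENNReal

lemma nonneg_of_forall_pos_add_mul_add_mul_sq_nonneg {p q r : ℝ} (hp : p ≤ 0)
    (h : ∀ t > 0, 0 ≤ p + q * t + r * t ^ 2) : 0 ≤ q := by
  by_contra! hq
  have hr : 0 < |r| + 1 := by positivity
  set t := -q / (|r| + 1)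
  have htpos : 0 < t := div_pos (neg_pos.2 hq) hr
  have htr : t * (|r| + 1) = -q := div_mul_cancel₀ _ hr.ne'
  nlinarith [h t htpos, le_abs_self r]

lemma le_two_mul_of_quadratic_perturbation {a b F E G : ℝ} (ha : 0 ≤ a) (hb : 0 ≤ b)
    (hE : 0 ≤ E) (hG : 0 ≤ G) (hstar : F + 2 * E + G ≤ 2 * (a + b))
    (hopt : ∀ β > 1, 2 * (a + β * b) ^ 2 ≤ (a + b) * (F + 2 * β * E + β ^ 2 * G)) :
    F ≤ 2 * a := by
  have hq : 0 ≤ 2 * (a + b) * (E + G - 2 * b) := by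
    -- the defect `(a + b)(F + 2βE + β²G) - 2(a + βb)²` at `β = 1 + t` is `p + q t + r t²`
    refine nonneg_of_forall_pos_add_mul_add_mul_sq_nonneg
      (p := (a + b) * (F + 2 * E + G) - 2 * (a + b) ^ 2) (r := (a + b) * G - 2 * b ^ 2)
      (by nlinarith) fun t ht => ?_
    linear_combination hopt (1 + t) (by linarith)
  rcases (add_nonneg ha hb).eq_or_lt with hS | hS <;> nlinarith

lemma ENNReal.one_half_mul_le_iff {x y : ℝ≥0∞} : 1 / 2 * x ≤ y ↔ x ≤ 2 * y := by
  rw [one_div, mul_comm, ← div_eq_mul_inv, ENNReal.div_le_iff (by norm_num) (by norm_num),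
    mul_comm]

lemma one_half_mul_le_of_quadratic_perturbation {a b F E G : ℝ≥0∞} (hfin : a + b ≠ ⊤)
    (hstar : 1 / 2 * (F + 2 * E + G) ≤ a + b)
    (hopt : ∀ β : ℝ≥0, F + 2 * β * E + β ^ 2 * G ≠ 0 → F + 2 * β * E + β ^ 2 * G ≠ ⊤ →
      2 * (a + β * b) ^ 2 ≤ (a + b) * (F + 2 * β * E + β ^ 2 * G)) :
    1 / 2 * F ≤ a := by
  rcases eq_or_ne F 0 with rfl | hF
  · simp
  rw [ENNReal.one_half_mul_le_iff] at hstar ⊢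
  have hsum : F + 2 * E + G ≠ ⊤ := ne_top_of_le_ne_top (mul_ne_top ofNat_ne_top hfin) hstar
  obtain ⟨ha, hb⟩ := add_ne_top.1 hfin
  obtain ⟨⟨hF', hE⟩, hG⟩ : (F ≠ ⊤ ∧ E ≠ ⊤) ∧ G ≠ ⊤ := by
    simpa [add_ne_top, mul_eq_top] using hsum
  lift a to ℝ≥0 using ha
  lift b to ℝ≥0 using hb
  lift F to ℝ≥0 using hF'
  lift E to ℝ≥0 using hE
  lift G to ℝ≥0 using hG
  have key : (F : ℝ) ≤ 2 * a := by
    refine le_two_mul_of_quadratic_perturbation a.2 b.2 E.2 G.2 (by exact_mod_cast hstar)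
      fun β hβ => ?_
    lift β to ℝ≥0 using by linarith
    exact_mod_cast hopt β (by positivity) (by finiteness)
  exact_mod_cast key

section KernelForm

variable {Ω : Type*} [MeasurableSpace Ω] {ν : Measure Ω} {k : Ω → Ω → ℝ≥0∞}
  {u v h : Ω → ℝ≥0∞}

/-- `Γ(f,W) = ∫ f dν - kernelForm ν (negLog W) f f / 2`. -/
noncomputable def kernelForm (ν : Measure Ω) (k : Ω → Ω → ℝ≥0∞) (u v : Ω → ℝ≥0∞) : ℝ≥0∞ :=
  ∫⁻ z, u z.1 * v z.2 * k z.1 z.2 ∂(ν.prod ν)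

noncomputable def kappa (ν : Measure Ω) (k : Ω → Ω → ℝ≥0∞) : ℝ≥0∞ :=
  sSup {r | ∃ f : Ω → ℝ≥0∞, Measurable f ∧ ∫⁻ x, f x ∂ν ≠ ⊤ ∧
    1 / 2 * kernelForm ν k f f ≤ ∫⁻ x, f x ∂ν ∧ r = ∫⁻ x, f x ∂ν}

lemma kernelForm_comm [SFinite ν] (hk : ∀ x y, k x y = k y x) :
    kernelForm ν k u v = kernelForm ν k v u := by
  rw [kernelForm, ← lintegral_prod_swap]
  simp only [kernelForm, Prod.fst_swap, Prod.snd_swap, hk, mul_comm (u _)]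

lemma kernelForm_add_mul_self [SFinite ν] (hk : Measurable (uncurry k))
    (hks : ∀ x y, k x y = k y x) (hu : Measurable u) (hv : Measurable v) (c : ℝ≥0∞) :
    kernelForm ν k (fun x => u x + c * v x) (fun x => u x + c * v x) =
      kernelForm ν k u u + 2 * c * kernelForm ν k u v + c ^ 2 * kernelForm ν k v v := by
  have hk' : Measurable fun z : Ω × Ω => k z.1 z.2 := hk
  have hexp : ∀ z : Ω × Ω, (u z.1 + c * v z.1) * (u z.2 + c * v z.2) * k z.1 z.2 =
      u z.1 * u z.2 * k z.1 z.2 + c * (u z.1 * v z.2 * k z.1 z.2) +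
        c * (v z.1 * u z.2 * k z.1 z.2) + c ^ 2 * (v z.1 * v z.2 * k z.1 z.2) :=
    fun z => by ring
  simp only [kernelForm, hexp]
  rw [lintegral_add_left (by fun_prop), lintegral_add_left (by fun_prop),
    lintegral_add_left (by fun_prop), lintegral_const_mul _ (by fun_prop),
    lintegral_const_mul _ (by fun_prop), lintegral_const_mul _ (by fun_prop)]
  rw [← kernelForm, ← kernelForm, ← kernelForm, ← kernelForm, kernelForm_comm hks (u := v)]
  ring

lemma kernelForm_const_mul_self {c : ℝ≥0∞} (hc : c ≠ ⊤) :
    kernelForm ν k (fun x => c * h x) (fun x => c * h x) = c ^ 2 * kernelForm ν k h h := by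
  rw [kernelForm, kernelForm, ← lintegral_const_mul' _ _ (pow_ne_top hc)]
  refine lintegral_congr fun z => ?_
  ring

lemma lintegral_le_kappa (hh : Measurable h) (hfin : ∫⁻ x, h x ∂ν ≠ ⊤)
    (hadm : 1 / 2 * kernelForm ν k h h ≤ ∫⁻ x, h x ∂ν) : ∫⁻ x, h x ∂ν ≤ kappa ν k :=
  le_sSup ⟨h, hh, hfin, hadm, rfl⟩

lemma two_mul_sq_lintegral_le_kappa_mul (hh : Measurable h) (hfin : ∫⁻ x, h x ∂ν ≠ ⊤)
    (hQ₀ : kernelForm ν k h h ≠ 0) (hQ : kernelForm ν k h h ≠ ⊤) :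
    2 * (∫⁻ x, h x ∂ν) ^ 2 ≤ kappa ν k * kernelForm ν k h h := by
  set L := ∫⁻ x, h x ∂ν
  set Q := kernelForm ν k h h
  set c := 2 * L / Q
  have hc : c ≠ ⊤ := div_ne_top (mul_ne_top ofNat_ne_top hfin) hQ₀
  have hcQ : c * Q = 2 * L := ENNReal.div_mul_cancel hQ₀ hQ
  have hmass : ∫⁻ x, c * h x ∂ν = c * L := lintegral_const_mul' c h hc
  have hadm : 1 / 2 * kernelForm ν k (fun x => c * h x) (fun x => c * h x) ≤
      ∫⁻ x, c * h x ∂ν := by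
    rw [kernelForm_const_mul_self hc, hmass, pow_two, mul_assoc, hcQ,
      ENNReal.one_half_mul_le_iff, mul_left_comm]
  have hκ := lintegral_le_kappa (hh.const_mul c) (hmass ▸ mul_ne_top hc hfin) hadm
  rw [hmass] at hκ
  calc 2 * L ^ 2 = c * L * Q := by rw [mul_right_comm, hcQ]; ring
    _ ≤ kappa ν k * Q := mul_le_mul_left hκ Q

end KernelForm

lemma measurable_uncurry_negLog {Ω : Type*} [MeasurableSpace Ω] {W : Ω → Ω → ℝ}
    (hW : Measurable (uncurry W)) : Measurable (uncurry (negLog W)) :=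
  Measurable.ite (measurableSet_eq_fun hW measurable_const) measurable_const
    (ENNReal.measurable_ofReal.comp (Real.measurable_log.comp hW).neg)

theorem subhistogram_of_optimal_admissible_general {Ω : Type*} [MeasurableSpace Ω]
    (ν : Measure Ω) [IsProbabilityMeasure ν]
    (W : Ω → Ω → ℝ) (hW : Measurable (Function.uncurry W))
    (hsymm : ∀ x y, W x y = W y x)
    (fstar : Ω → ENNReal) (hfm : Measurable fstar) (hfi : (∫⁻ x, fstar x ∂ν) ≠ ⊤)
    (hadm : (1 / 2) * (∫⁻ z, fstar z.1 * fstar z.2 * negLog W z.1 z.2 ∂(ν.prod ν)) ≤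
      ∫⁻ x, fstar x ∂ν)
    (hopt : (∫⁻ x, fstar x ∂ν) =
      sSup {r : ENNReal | ∃ f : Ω → ENNReal, Measurable f ∧ (∫⁻ x, f x ∂ν) ≠ ⊤ ∧
        (1 / 2) * (∫⁻ z, f z.1 * f z.2 * negLog W z.1 z.2 ∂(ν.prod ν)) ≤
          (∫⁻ x, f x ∂ν) ∧
        r = ∫⁻ x, f x ∂ν}) :
    ∀ f : Ω → ENNReal, Measurable f → (∀ x, f x ≤ fstar x) →
      (1 / 2) * (∫⁻ z, f z.1 * f z.2 * negLog W z.1 z.2 ∂(ν.prod ν)) ≤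
        ∫⁻ x, f x ∂ν := by
  intro f hf hle
  have hk := measurable_uncurry_negLog hW
  have hks : ∀ x y, negLog W x y = negLog W y x := fun x y => by rw [negLog, negLog, hsymm]
  obtain ⟨g, hg, hfg⟩ : ∃ g, Measurable g ∧ fstar = fun x => f x + 1 * g x :=
    ⟨fun x => fstar x - f x, hfm.sub hf,
      funext fun x => by rw [one_mul, add_tsub_cancel_of_le (hle x)]⟩
  have hmass (c : ℝ≥0∞) : ∫⁻ x, f x + c * g x ∂ν = ∫⁻ x, f x ∂ν + c * ∫⁻ x, g x ∂ν := by
    rw [lintegral_add_left hf, lintegral_const_mul c hg]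
  have hform := kernelForm_add_mul_self (ν := ν) hk hks hf hg
  change _ = kappa ν (negLog W) at hopt
  change 1 / 2 * kernelForm ν (negLog W) fstar fstar ≤ _ at hadm
  change 1 / 2 * kernelForm ν (negLog W) f f ≤ _
  rw [hfg, hform, hmass] at hadm
  rw [hfg, hmass] at hfi hopt
  simp only [one_mul, mul_one, one_pow] at hadm hfi hopt
  refine one_half_mul_le_of_quadratic_perturbation hfi hadm fun β hQ₀ hQ => ?_
  rw [hopt, ← hmass, ← hform]
  rw [← hform] at hQ₀ hQ
  obtain ⟨ha, hb⟩ := add_ne_top.1 hfi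
  exact two_mul_sq_lintegral_le_kappa_mul (hf.add (hg.const_mul _))
    (by rw [hmass]; exact add_ne_top.2 ⟨ha, mul_ne_top coe_ne_top hb⟩) hQ₀ hQ

/-- Lemma A.1: if an admissible histogram `f*` attains
`κ(W) = sup{‖f‖₁ : f nonnegative L¹, Γ(f,W) ≥ 0}`, then every nonnegative measurable
`f ≤ f*` is admissible, i.e. satisfies `Γ(f,W) ≥ 0`.  (Admissibility `Γ(f,W) ≥ 0` is
expressed as `(1/2) ∫∫ f(x)f(y) log(1/W(x,y)) ≤ ∫ f`.) -/
theorem subhistogram_of_optimal_admissible {Ω : Type*} [MeasurableSpace Ω]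
    (ν : Measure Ω) [IsProbabilityMeasure ν]
    (W : Ω → Ω → ℝ) (hW : Measurable (Function.uncurry W))
    (hsymm : ∀ x y, W x y = W y x) (h0 : ∀ x y, 0 ≤ W x y) (h1 : ∀ x y, W x y ≤ 1)
    (fstar : Ω → ENNReal) (hfm : Measurable fstar) (hfi : (∫⁻ x, fstar x ∂ν) ≠ ⊤)
    (hadm : (1 / 2) * (∫⁻ z, fstar z.1 * fstar z.2 * negLog W z.1 z.2 ∂(ν.prod ν)) ≤
      ∫⁻ x, fstar x ∂ν)
    (hopt : (∫⁻ x, fstar x ∂ν) =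
      sSup {r : ENNReal | ∃ f : Ω → ENNReal, Measurable f ∧ (∫⁻ x, f x ∂ν) ≠ ⊤ ∧
        (1 / 2) * (∫⁻ z, f z.1 * f z.2 * negLog W z.1 z.2 ∂(ν.prod ν)) ≤
          (∫⁻ x, f x ∂ν) ∧
        r = ∫⁻ x, f x ∂ν}) :
    ∀ f : Ω → ENNReal, Measurable f → (∀ x, f x ≤ fstar x) →
      (1 / 2) * (∫⁻ z, f z.1 * f z.2 * negLog W z.1 z.2 ∂(ν.prod ν)) ≤
        ∫⁻ x, f x ∂ν :=
  subhistogram_of_optimal_admissible_general ν W hW hsymm fstar hfm hfi hadm hopt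
end

section
/- Let W : (0,1)² → [0,1] be measurable, symmetric, with ess inf W > 0, suppose every point of (0,1)² is either a Lebesgue point of W or W attains its essential infimum c there (after modification on a null set), and let F = {x_1 < … < x_r} ⊂ (0,1). Then inf_{A} (1/λ(A)²) ∫∫_{A×A} log(1/W) dλ² ≤ −( (r−1)/r · (2/(r(r−1))) Σ_{i<j} log W(x_i,x_j) + (1/r) log c ), where the infimum is over positive-measure measurable A ⊆ (0,1). -/
/-!
Take `A = ⋃ i, [x i - δ, x i + δ]` for small `δ`. Then `A × A` is the disjoint union of the `r²`
squares of side `2δ` centred at the points `(x i, x j)`, so the average of `log (1 / W)` over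
`A × A` is the mean of its averages over these squares. Since `t ↦ log (1 / t)` is
`1 / c`-Lipschitz on `[c, 1]`, the square average is at most `log (1 / W (x i, x j)) + ε` for
small `δ` at a Lebesgue point, and at most `log (1 / c)` where `W (x i, x j) = c`, because
`W ≥ c`. Hence the infimum is at most `r⁻² ∑ i j, log (1 / W (x i) (x j))`; by symmetry this
sum counts each pair `i < j` twice, and its diagonal terms are at most `log (1 / c)`.
-/

open MeasureTheory Set Filter Metric Topology Real Function
open scoped ENNReal

lemma log_one_div_mem_Icc {a c : ℝ} (hc : 0 < c) (ha : a ∈ Icc c 1) :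
    log (1 / a) ∈ Icc 0 (log (1 / c)) := by
  have ha0 : 0 < a := hc.trans_le ha.1
  exact ⟨log_nonneg (one_le_one_div ha0 ha.2),
    log_le_log (one_div_pos.2 ha0) (one_div_le_one_div_of_le hc ha.1)⟩

lemma log_one_div_le_add_abs_sub_div {a b c : ℝ} (hc : 0 < c) (ha : c ≤ a) (hb : 0 < b) :
    log (1 / a) ≤ log (1 / b) + |a - b| / c := by
  have ha0 : 0 < a := hc.trans_le ha
  have hlog : log (1 / a) - log (1 / b) = log (b / a) := by
    rw [one_div, one_div, log_inv, log_inv, log_div hb.ne' ha0.ne']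
    ring
  have : log (b / a) ≤ |a - b| / c := calc
    log (b / a) ≤ b / a - 1 := log_le_sub_one_of_pos (by positivity)
    _ = (b - a) / a := by field_simp
    _ ≤ |a - b| / a := by gcongr; exact abs_sub_comm a b ▸ le_abs_self _
    _ ≤ |a - b| / c := by gcongr
  linarith

lemma sum_prod_eq_two_nsmul_sum_lt_add_sum_diag {ι M : Type*} [Fintype ι] [LinearOrder ι]
    [AddCommMonoid M] {a : ι → ι → M} (ha : ∀ i j, a i j = a j i) :
    ∑ p : ι × ι, a p.1 p.2 =
      2 • ∑ p : ι × ι with p.1 < p.2, a p.1 p.2 + ∑ i, a i i := by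
  have htri : ∀ p : ι × ι, a p.1 p.2 = (if p.1 < p.2 then a p.1 p.2 else 0) +
      (if p.2 < p.1 then a p.1 p.2 else 0) + (if p.1 = p.2 then a p.1 p.2 else 0) := by
    rintro ⟨i, j⟩
    rcases lt_trichotomy i j with h | rfl | h
    · simp [h, h.not_gt, h.ne]
    · simp
    · simp [h, h.not_gt, h.ne']
  have hswap : ∑ p : ι × ι, (if p.2 < p.1 then a p.1 p.2 else 0) =
      ∑ p : ι × ι, (if p.1 < p.2 then a p.1 p.2 else 0) :=
    Fintype.sum_equiv (Equiv.prodComm ι ι) _ _ fun p => by rw [ha p.1 p.2]; rfl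
  have hdiag : ∑ p : ι × ι, (if p.1 = p.2 then a p.1 p.2 else 0) = ∑ i, a i i := by
    rw [Fintype.sum_prod_type]
    exact Finset.sum_congr rfl fun i _ => by simp
  rw [Finset.sum_congr rfl fun p _ => htri p, Finset.sum_add_distrib, Finset.sum_add_distrib,
    hswap, hdiag, ← Finset.sum_filter, two_nsmul]

section Integral

variable {α : Type*} [MeasurableSpace α] {μ : Measure α} {f : α → ℝ} {s : Set α} {c : ℝ}

lemma integrableOn_of_mem_Icc {a b : ℝ} (hf : Measurable f) (hs : MeasurableSet s)
    (hμs : μ s ≠ ∞) (hfs : ∀ z ∈ s, f z ∈ Icc a b) : IntegrableOn f s μ :=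
  Measure.integrableOn_of_bounded hμs hf.aestronglyMeasurable
    (ae_restrict_of_forall_mem hs fun z hz => abs_le_max_abs_abs (hfs z hz).1 (hfs z hz).2)

lemma integrableOn_log_one_div (hc : 0 < c) (hf : Measurable f) (hs : MeasurableSet s)
    (hμs : μ s ≠ ∞) (hfs : ∀ z ∈ s, f z ∈ Icc c 1) :
    IntegrableOn (fun z => log (1 / f z)) s μ :=
  integrableOn_of_mem_Icc (by fun_prop) hs hμs fun z hz => log_one_div_mem_Icc hc (hfs z hz)

lemma setIntegral_log_one_div_le (hc : 0 < c) (hf : Measurable f) (hs : MeasurableSet s)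
    (hμs : μ s ≠ ∞) (hfs : ∀ z ∈ s, f z ∈ Icc c 1) :
    ∫ z in s, log (1 / f z) ∂μ ≤ μ.real s * log (1 / c) := by
  calc ∫ z in s, log (1 / f z) ∂μ ≤ ∫ _ in s, log (1 / c) ∂μ :=
        setIntegral_mono_on (integrableOn_log_one_div hc hf hs hμs hfs) (integrableOn_const hμs)
          hs fun z hz => (log_one_div_mem_Icc hc (hfs z hz)).2
    _ = μ.real s * log (1 / c) := by rw [setIntegral_const, smul_eq_mul]

lemma setIntegral_log_one_div_le_add (hc : 0 < c) (hf : Measurable f) (hs : MeasurableSet s)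
    (hμs : μ s ≠ ∞) (hfs : ∀ z ∈ s, f z ∈ Icc c 1) {b : ℝ} (hb : 0 < b) :
    ∫ z in s, log (1 / f z) ∂μ ≤
      μ.real s * log (1 / b) + (∫ z in s, |f z - b| ∂μ) / c := by
  have hfb : IntegrableOn (fun z => |f z - b|) s μ :=
    ((integrableOn_of_mem_Icc hf hs hμs hfs).sub (integrableOn_const hμs)).abs
  calc ∫ z in s, log (1 / f z) ∂μ ≤ ∫ z in s, (log (1 / b) + |f z - b| / c) ∂μ :=
        setIntegral_mono_on (integrableOn_log_one_div hc hf hs hμs hfs)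
          ((integrableOn_const hμs).add (hfb.div_const c)) hs
          fun z hz => log_one_div_le_add_abs_sub_div hc (hfs z hz).1 hb
    _ = μ.real s * log (1 / b) + (∫ z in s, |f z - b| ∂μ) / c := by
      rw [integral_add (integrableOn_const (C := log (1 / b)) hμs) (hfb.div_const c),
        setIntegral_const, smul_eq_mul, integral_div]

end Integral

lemma setIntegral_iUnion_prod_iUnion {ι κ α β : Type*} [Fintype ι] [Fintype κ]
    [MeasurableSpace α] [MeasurableSpace β] {μ : Measure α} {ν : Measure β}
    {S : ι → Set α} {T : κ → Set β} (hS : ∀ i, MeasurableSet (S i))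
    (hT : ∀ j, MeasurableSet (T j)) (hSd : Pairwise (Disjoint on S))
    (hTd : Pairwise (Disjoint on T)) {g : α × β → ℝ}
    (hg : IntegrableOn g ((⋃ i, S i) ×ˢ ⋃ j, T j) (μ.prod ν)) :
    ∫ z in (⋃ i, S i) ×ˢ ⋃ j, T j, g z ∂μ.prod ν =
      ∑ p : ι × κ, ∫ z in S p.1 ×ˢ T p.2, g z ∂μ.prod ν := by
  rw [← iUnion_prod] at hg ⊢
  have hd : Pairwise (Disjoint on fun p : ι × κ => S p.1 ×ˢ T p.2) := by
    intro p q hpq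
    refine Set.disjoint_prod.2 ?_
    by_cases h : p.1 = q.1
    · exact Or.inr (hTd fun h' => hpq (Prod.ext h h'))
    · exact Or.inl (hSd h)
  rw [integral_iUnion (fun p : ι × κ => (hS p.1).prod (hT p.2)) hd hg,
    tsum_fintype]

section Ball

variable {α : Type*} [PseudoMetricSpace α] [MeasurableSpace α] [OpensMeasurableSpace α]
  [ProperSpace α] {μ : Measure α} [IsFiniteMeasureOnCompacts μ] [μ.IsOpenPosMeasure]

lemma eventually_setIntegral_closedBall_log_one_div_le {f : α → ℝ} {p : α} {c ε : ℝ}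
    (hc : 0 < c) (hε : 0 < ε) (hf : Measurable f) (hfp : ∀ᶠ z in 𝓝 p, f z ∈ Icc c 1)
    (hp : Tendsto (fun δ => (μ (closedBall p δ)).toReal⁻¹ *
        ∫ z in closedBall p δ, |f z - f p| ∂μ) (𝓝[>] 0) (𝓝 0) ∨ f p = c) :
    ∀ᶠ δ in 𝓝[>] 0, ∫ z in closedBall p δ, log (1 / f z) ∂μ ≤
      μ.real (closedBall p δ) * (log (1 / f p) + ε) := by
  have hball : ∀ᶠ δ in 𝓝[>] (0 : ℝ), 0 < δ ∧ ∀ z ∈ closedBall p δ, f z ∈ Icc c 1 :=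
    eventually_mem_nhdsWithin.and (nhdsWithin_le_nhds (eventually_closedBall_subset hfp))
  have hμ : ∀ δ, μ (closedBall p δ) ≠ ∞ := fun δ => measure_closedBall_lt_top.ne
  rcases hp with hleb | hpc
  · filter_upwards [hball, hleb.eventually_lt_const (mul_pos hc hε)] with δ ⟨hδ, hfδ⟩ hlt
    have hpos : 0 < μ.real (closedBall p δ) :=
      ENNReal.toReal_pos (measure_closedBall_pos μ p hδ).ne' (hμ δ)
    have hI : ∫ z in closedBall p δ, |f z - f p| ∂μ ≤
        c * ε * μ.real (closedBall p δ) := by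
      rw [← measureReal_def, inv_mul_lt_iff₀ hpos] at hlt
      linarith
    calc ∫ z in closedBall p δ, log (1 / f z) ∂μ
        ≤ μ.real (closedBall p δ) * log (1 / f p) +
            (∫ z in closedBall p δ, |f z - f p| ∂μ) / c :=
          setIntegral_log_one_div_le_add hc hf measurableSet_closedBall (hμ δ) hfδ
            (hc.trans_le (hfp.self_of_nhds).1)
      _ ≤ μ.real (closedBall p δ) * log (1 / f p) + c * ε * μ.real (closedBall p δ) / c := by
          gcongr
      _ = μ.real (closedBall p δ) * (log (1 / f p) + ε) := by field_simp
  · filter_upwards [hball] with δ ⟨_, hfδ⟩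
    rw [hpc]
    calc ∫ z in closedBall p δ, log (1 / f z) ∂μ
        ≤ μ.real (closedBall p δ) * log (1 / c) :=
          setIntegral_log_one_div_le hc hf measurableSet_closedBall (hμ δ) hfδ
      _ ≤ μ.real (closedBall p δ) * (log (1 / c) + ε) := by
          gcongr
          linarith

end Ball

lemma eventually_pairwise_disjoint_closedBall {ι α : Type*} [Finite ι] [MetricSpace α]
    {x : ι → α} (hx : Injective x) :
    ∀ᶠ δ in 𝓝 (0 : ℝ), Pairwise (Disjoint on fun i => closedBall (x i) δ) := by
  have hpair : ∀ i j, ∀ᶠ δ in 𝓝 (0 : ℝ), i ≠ j →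
      Disjoint (closedBall (x i) δ) (closedBall (x j) δ) := by
    intro i j
    by_cases hij : i = j
    · exact .of_forall fun _ h => absurd hij h
    have hdist : 0 < dist (x i) (x j) := dist_pos.2 (hx.ne hij)
    filter_upwards [Iio_mem_nhds (half_pos hdist)] with δ hδ _
    exact closedBall_disjoint_closedBall (by linarith [mem_Iio.1 hδ])
  exact eventually_all.2 fun i => eventually_all.2 (hpair i)

lemma volume_iUnion_closedBall {ι : Type*} [Fintype ι] {x : ι → ℝ} {δ : ℝ}
    (hd : Pairwise (Disjoint on fun i => closedBall (x i) δ)) :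
    volume (⋃ i, closedBall (x i) δ) = Fintype.card ι * ENNReal.ofReal (2 * δ) := by
  rw [measure_iUnion hd fun _ => measurableSet_closedBall, tsum_fintype]
  simp [Real.volume_closedBall]

lemma volume_real_closedBall_prod {a b δ : ℝ} (hδ : 0 ≤ δ) :
    volume.real (closedBall (a, b) δ) = (2 * δ) ^ 2 := by
  rw [← closedBall_prod_same, Measure.volume_eq_prod, measureReal_prod_prod,
    Real.volume_real_closedBall hδ, Real.volume_real_closedBall hδ, sq]

noncomputable def squareAverage (g : ℝ × ℝ → ℝ) (A : Set ℝ) : ℝ :=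
  1 / (volume A).toReal ^ 2 * ∫ z in A ×ˢ A, g z

lemma squareAverage_log_one_div_nonneg {U A : Set ℝ} {f : ℝ × ℝ → ℝ} {c : ℝ} (hc : 0 < c)
    (hfU : ∀ z ∈ U ×ˢ U, f z ∈ Icc c 1) (hA : MeasurableSet A) (hAU : A ⊆ U) :
    0 ≤ squareAverage (fun z => log (1 / f z)) A :=
  mul_nonneg (by positivity) <| setIntegral_nonneg (hA.prod hA) fun z hz =>
    (log_one_div_mem_Icc hc (hfU z ⟨hAU hz.1, hAU hz.2⟩)).1

lemma squareAverage_iUnion_closedBall {ι : Type*} [Fintype ι] {x : ι → ℝ} {δ : ℝ}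
    (hδ : 0 ≤ δ) (hd : Pairwise (Disjoint on fun i => closedBall (x i) δ)) {g : ℝ × ℝ → ℝ}
    (hg : IntegrableOn g ((⋃ i, closedBall (x i) δ) ×ˢ ⋃ i, closedBall (x i) δ)) :
    squareAverage g (⋃ i, closedBall (x i) δ) =
      1 / (Fintype.card ι * (2 * δ)) ^ 2 *
        ∑ p : ι × ι, ∫ z in closedBall (x p.1, x p.2) δ, g z := by
  rw [squareAverage, volume_iUnion_closedBall hd, ENNReal.toReal_mul,
    ENNReal.toReal_ofReal (by linarith), ENNReal.toReal_natCast]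
  simp only [← closedBall_prod_same]
  congr 1
  exact setIntegral_iUnion_prod_iUnion (fun _ => measurableSet_closedBall)
    (fun _ => measurableSet_closedBall) hd hd hg

lemma exists_squareAverage_log_one_div_le {ι : Type*} [Fintype ι] [Nonempty ι] {U : Set ℝ}
    (hU : IsOpen U) {f : ℝ × ℝ → ℝ} {c ε : ℝ} (hc : 0 < c) (hε : 0 < ε)
    (hf : Measurable f) (hfU : ∀ z ∈ U ×ˢ U, f z ∈ Icc c 1) {x : ι → ℝ}
    (hx : Injective x) (hxU : ∀ i, x i ∈ U)
    (hpt : ∀ i j, Tendsto (fun δ => (volume (closedBall (x i, x j) δ)).toReal⁻¹ *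
        ∫ z in closedBall (x i, x j) δ, |f z - f (x i, x j)|) (𝓝[>] 0) (𝓝 0) ∨
      f (x i, x j) = c) :
    ∃ A ⊆ U, MeasurableSet A ∧ 0 < volume A ∧
      squareAverage (fun z => log (1 / f z)) A ≤
        1 / (Fintype.card ι : ℝ) ^ 2 * ∑ p : ι × ι, log (1 / f (x p.1, x p.2)) + ε := by
  obtain ⟨δ, hδ, hδU, hd, hball⟩ : ∃ δ > 0, (∀ i, closedBall (x i) δ ⊆ U) ∧
      Pairwise (Disjoint on fun i => closedBall (x i) δ) ∧
      ∀ p : ι × ι, ∫ z in closedBall (x p.1, x p.2) δ, log (1 / f z) ≤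
        (2 * δ) ^ 2 * (log (1 / f (x p.1, x p.2)) + ε) := by
    have hsmall : ∀ᶠ δ in 𝓝[>] (0 : ℝ), (∀ i, closedBall (x i) δ ⊆ U) ∧
        Pairwise (Disjoint on fun i => closedBall (x i) δ) :=
      nhdsWithin_le_nhds <| (eventually_all.2 fun i =>
        eventually_closedBall_subset (hU.mem_nhds (hxU i))).and
          (eventually_pairwise_disjoint_closedBall hx)
    have hint := eventually_all.2 fun p : ι × ι =>
      eventually_setIntegral_closedBall_log_one_div_le hc hε hf
        (eventually_of_mem ((hU.prod hU).mem_nhds ⟨hxU p.1, hxU p.2⟩) hfU) (hpt p.1 p.2)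
    obtain ⟨δ, hδ, ⟨hδU, hd⟩, hball⟩ :=
      (eventually_mem_nhdsWithin.and (hsmall.and hint)).exists
    refine ⟨δ, hδ, hδU, hd, fun p => ?_⟩
    simpa only [volume_real_closedBall_prod (le_of_lt hδ)] using hball p
  set A := ⋃ i, closedBall (x i) δ
  have hA : MeasurableSet A := .iUnion fun _ => measurableSet_closedBall
  have hAU : A ⊆ U := iUnion_subset hδU
  have hvol : volume A = Fintype.card ι * ENNReal.ofReal (2 * δ) := volume_iUnion_closedBall hd
  have hvol2 : volume (A ×ˢ A) ≠ ∞ := by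
    rw [Measure.volume_eq_prod, Measure.prod_prod, hvol]
    finiteness
  have hg : IntegrableOn (fun z => log (1 / f z)) (A ×ˢ A) :=
    integrableOn_log_one_div hc hf (hA.prod hA) hvol2 fun z hz => hfU z ⟨hAU hz.1, hAU hz.2⟩
  refine ⟨A, hAU, hA, by simp [hvol, hδ, Fintype.card_pos], ?_⟩
  calc squareAverage (fun z => log (1 / f z)) A
      = 1 / (Fintype.card ι * (2 * δ)) ^ 2 *
          ∑ p : ι × ι, ∫ z in closedBall (x p.1, x p.2) δ, log (1 / f z) :=
        squareAverage_iUnion_closedBall hδ.le hd hg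
    _ ≤ 1 / (Fintype.card ι * (2 * δ)) ^ 2 *
          ∑ p : ι × ι, (2 * δ) ^ 2 * (log (1 / f (x p.1, x p.2)) + ε) := by
        gcongr with p
        exact hball p
    _ = 1 / (Fintype.card ι : ℝ) ^ 2 * ∑ p : ι × ι, log (1 / f (x p.1, x p.2)) + ε := by
        rw [← Finset.mul_sum, Finset.sum_add_distrib, Finset.sum_const, Finset.card_univ,
          Fintype.card_prod, nsmul_eq_mul]
        push_cast
        field_simp

lemma mean_log_one_div_le {ι : Type*} [Fintype ι] [LinearOrder ι] (hι : 2 ≤ Fintype.card ι)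
    {a : ι → ι → ℝ} {c : ℝ} (hc : 0 < c) (ha : ∀ i j, a i j = a j i)
    (hac : ∀ i, c ≤ a i i) :
    1 / (Fintype.card ι : ℝ) ^ 2 * ∑ p : ι × ι, log (1 / a p.1 p.2) ≤
      -(((Fintype.card ι : ℝ) - 1) / Fintype.card ι *
          (2 / ((Fintype.card ι : ℝ) * ((Fintype.card ι : ℝ) - 1))) *
          (∑ p ∈ Finset.univ.filter (fun p : ι × ι => p.1 < p.2), log (a p.1 p.2)) +
        (1 / (Fintype.card ι : ℝ)) * log c) := by
  have hr : (2 : ℝ) ≤ Fintype.card ι := by exact_mod_cast hι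
  set r : ℝ := (Fintype.card ι : ℝ)
  set S := ∑ p ∈ Finset.univ.filter (fun p : ι × ι => p.1 < p.2), log (a p.1 p.2)
  set D := ∑ i, log (a i i)
  have hsum : ∑ p : ι × ι, log (1 / a p.1 p.2) = -(2 * S + D) := by
    have hsymm : ∑ p : ι × ι, log (a p.1 p.2) = 2 • S + D :=
      sum_prod_eq_two_nsmul_sum_lt_add_sum_diag (a := fun i j => log (a i j)) fun i j => by rw [ha]
    simp only [one_div, log_inv, Finset.sum_neg_distrib, hsymm, two_nsmul]
    ring
  have hD : r * log c ≤ D := by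
    simpa using Finset.sum_le_sum fun i (_ : i ∈ Finset.univ) => log_le_log hc (hac i)
  have hcoef : (r - 1) / r * (2 / (r * (r - 1))) = 2 / r ^ 2 := by
    have : r - 1 ≠ 0 := by linarith
    field_simp
  have hlogc : 1 / r * log c ≤ 1 / r ^ 2 * D := calc
    1 / r * log c = 1 / r ^ 2 * (r * log c) := by field_simp
    _ ≤ 1 / r ^ 2 * D := by gcongr
  rw [hsum, hcoef]
  linarith [show 1 / r ^ 2 * -(2 * S + D) = -(2 / r ^ 2 * S + 1 / r ^ 2 * D) by ring]

theorem inf_average_le_point_bound_general (W : ℝ → ℝ → ℝ) (c : ℝ) (hc : 0 < c)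
    (hmeas : Measurable (Function.uncurry W)) (hsymm : ∀ x y, W x y = W y x)
    (hrange : ∀ x y, x ∈ Set.Ioo (0 : ℝ) 1 → y ∈ Set.Ioo (0 : ℝ) 1 →
      W x y ∈ Set.Icc c 1)
    (hpt : ∀ x y, x ∈ Set.Ioo (0 : ℝ) 1 → y ∈ Set.Ioo (0 : ℝ) 1 →
      (Tendsto (fun r : ℝ =>
          ((volume (Metric.closedBall ((x, y) : ℝ × ℝ) r)).toReal)⁻¹ *
            ∫ z in Metric.closedBall ((x, y) : ℝ × ℝ) r, |W z.1 z.2 - W x y|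
              ∂(volume : Measure (ℝ × ℝ)))
        (nhdsWithin 0 (Set.Ioi 0)) (nhds 0)) ∨ W x y = c)
    (r : ℕ) (hr : 2 ≤ r) (x : Fin r → ℝ) (hmono : StrictMono x)
    (hxin : ∀ i, x i ∈ Set.Ioo (0 : ℝ) 1) :
    sInf {t : ℝ | ∃ A : Set ℝ, A ⊆ Set.Ioo 0 1 ∧ MeasurableSet A ∧ 0 < volume A ∧
        t = (1 / ((volume A).toReal ^ 2)) *
          ∫ z in A ×ˢ A, Real.log (1 / W z.1 z.2) ∂(volume : Measure (ℝ × ℝ))} ≤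
      -(((r : ℝ) - 1) / r * (2 / ((r : ℝ) * ((r : ℝ) - 1))) *
          (∑ p ∈ Finset.univ.filter (fun p : Fin r × Fin r => p.1 < p.2),
            Real.log (W (x p.1) (x p.2))) +
        (1 / (r : ℝ)) * Real.log c) := by
  have hW : ∀ z ∈ Ioo (0 : ℝ) 1 ×ˢ Ioo (0 : ℝ) 1, uncurry W z ∈ Icc c 1 :=
    fun z hz => hrange z.1 z.2 hz.1 hz.2
  have : Nonempty (Fin r) := ⟨⟨0, by omega⟩⟩
  calc _ ≤ 1 / (r : ℝ) ^ 2 * ∑ p : Fin r × Fin r, log (1 / W (x p.1) (x p.2)) := by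
        refine le_of_forall_pos_le_add fun ε hε => ?_
        obtain ⟨A, hAU, hA, hA0, hle⟩ := exists_squareAverage_log_one_div_le isOpen_Ioo hc hε
          hmeas hW hmono.injective hxin fun i j => hpt _ _ (hxin i) (hxin j)
        rw [Fintype.card_fin] at hle
        refine (csInf_le ⟨0, ?_⟩ ?_).trans hle
        · rintro _ ⟨B, hBU, hB, -, rfl⟩
          exact squareAverage_log_one_div_nonneg hc hW hB hBU
        · exact ⟨A, hAU, hA, hA0, rfl⟩
    _ ≤ _ := by
        have := mean_log_one_div_le (ι := Fin r) (by rwa [Fintype.card_fin]) hc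
          (fun i j => hsymm (x i) (x j)) fun i => (hrange _ _ (hxin i) (hxin i)).1
        rwa [Fintype.card_fin] at this

/-- Claim 3.5: let `W : (0,1)² → [c,1]` be measurable and symmetric with essential
infimum `c > 0`, such that every point of `(0,1)²` is either a Lebesgue point of `W`
(for the squares `M_r(x,y)`, i.e. sup-metric closed balls) or a point where `W`
attains the value `c`.  Then for every set `F = {x_1 < … < x_r} ⊂ (0,1)` (`r ≥ 2`),
`inf_A (1/λ(A)²) ∫∫_{A×A} log(1/W) ≤ -((r-1)/r · (2/(r(r-1))) Σ_{i<j} log W(x_i,x_j)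
+ (1/r) log c)`. -/
theorem inf_average_le_point_bound (W : ℝ → ℝ → ℝ) (c : ℝ) (hc : 0 < c)
    (hmeas : Measurable (Function.uncurry W)) (hsymm : ∀ x y, W x y = W y x)
    (hrange : ∀ x y, x ∈ Set.Ioo (0 : ℝ) 1 → y ∈ Set.Ioo (0 : ℝ) 1 →
      W x y ∈ Set.Icc c 1)
    (hessinf : essInf (fun z : ℝ × ℝ => W z.1 z.2)
      ((volume.restrict (Set.Ioo (0 : ℝ) 1)).prod
        (volume.restrict (Set.Ioo (0 : ℝ) 1))) = c)
    (hpt : ∀ x y, x ∈ Set.Ioo (0 : ℝ) 1 → y ∈ Set.Ioo (0 : ℝ) 1 →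
      (Tendsto (fun r : ℝ =>
          ((volume (Metric.closedBall ((x, y) : ℝ × ℝ) r)).toReal)⁻¹ *
            ∫ z in Metric.closedBall ((x, y) : ℝ × ℝ) r, |W z.1 z.2 - W x y|
              ∂(volume : Measure (ℝ × ℝ)))
        (nhdsWithin 0 (Set.Ioi 0)) (nhds 0)) ∨ W x y = c)
    (r : ℕ) (hr : 2 ≤ r) (x : Fin r → ℝ) (hmono : StrictMono x)
    (hxin : ∀ i, x i ∈ Set.Ioo (0 : ℝ) 1) :
    sInf {t : ℝ | ∃ A : Set ℝ, A ⊆ Set.Ioo 0 1 ∧ MeasurableSet A ∧ 0 < volume A ∧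
        t = (1 / ((volume A).toReal ^ 2)) *
          ∫ z in A ×ˢ A, Real.log (1 / W z.1 z.2) ∂(volume : Measure (ℝ × ℝ))} ≤
      -(((r : ℝ) - 1) / r * (2 / ((r : ℝ) * ((r : ℝ) - 1))) *
          (∑ p ∈ Finset.univ.filter (fun p : Fin r × Fin r => p.1 < p.2),
            Real.log (W (x p.1) (x p.2))) +
        (1 / (r : ℝ)) * Real.log c) :=
  inf_average_le_point_bound_general W c hc hmeas hsymm hrange hpt r hr x hmono hxin
end
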